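/- arXiv:2103.11361 — 4 statements merged into one kernel-verified Lean document; each statement's English description precedes it below -/
import Mathlib

section
/- Let 0 ≤ θ < 1 and C ≥ 1, and let A : ℤ₊ × ℤ₊ → ℂ satisfy: (i) |A(r, n₁·n)| ≤ |A(r, n₁)|·|A(1, n)| for all positive integers r, n₁, n such that every prime factor of n₁ divides r and gcd(n, r) = 1; (ii) |A(r, n₁)| ≤ C·(r·n₁)^θ for all positive integers r, n₁ such that every prime factor of n₁ divides r; (iii) ∑_{n ≤ x} |A(1,n)|² ≤ C·x for all real x ≥ 1. Then for every ε > 0 there exists a constant C′ = C′(C, θ, ε) such that for all positive integers r and all real N ≥ 1, ∑_{N < n ≤ 2N} |A(r,n)| ≤ C′·r^{θ+ε}·N. -/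
/-!
Split `n = a b` with `a` the part of `n` supported on primes dividing `r` and `b` coprime to `r`.
Then `|A(r,n)| ≤ C (ra)^θ |A(1,b)|`, and for fixed `a` Cauchy–Schwarz with the second-moment
bound gives `∑_{b ≤ M/a} |A(1,b)| ≤ √C M/a`. This leaves `C √C r^θ M ∑_a a^{θ-1}` over the
`r`-factored `a`, which is at most the Euler product `∏_{p ∣ r} (1 - p^{θ-1})⁻¹`. Each factor
is `≤ p^ε` once `p` is large and uniformly bounded otherwise, so the product is `≪_ε r^ε`.
-/

open Finset Filter

namespace Nat

/-- Every exponent in the factorization of `n` is below `n`, so this is the largest divisor of `n`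
all of whose prime factors divide `r`. -/
def smoothPart (r n : ℕ) : ℕ := n.gcd (r ^ n)

variable {r n : ℕ}

lemma smoothPart_dvd (r n : ℕ) : smoothPart r n ∣ n := gcd_dvd_left _ _

lemma smoothPart_pos (hn : 0 < n) : 0 < smoothPart r n := gcd_pos_of_pos_left _ hn

lemma Prime.dvd_of_dvd_smoothPart {p : ℕ} (hp : p.Prime) (h : p ∣ smoothPart r n) : p ∣ r :=
  hp.dvd_of_dvd_pow (h.trans (gcd_dvd_right _ _))

lemma smoothPart_mem_factoredNumbers (hr : r ≠ 0) :
    smoothPart r n ∈ factoredNumbers r.primeFactors :=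
  mem_factoredNumbers'.mpr fun _ hp h ↦ mem_primeFactors.mpr ⟨hp, hp.dvd_of_dvd_smoothPart h, hr⟩

lemma coprime_div_smoothPart (hn : n ≠ 0) : Coprime (n / smoothPart r n) r := by
  refine Nat.coprime_of_dvd fun p hp hpm hpr ↦ ?_
  -- the full power of `p` in `n` already divides `r ^ n`, hence `smoothPart r n`
  have hord : ordProj[p] n ∣ smoothPart r n :=
    dvd_gcd (ordProj_dvd n p)
      ((pow_dvd_pow p (factorization_lt p hn).le).trans (pow_dvd_pow_of_dvd hpr n))
  refine pow_succ_factorization_not_dvd hn hp ?_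
  calc p ^ (n.factorization p + 1) = ordProj[p] n * p := pow_succ _ _
    _ ∣ smoothPart r n * (n / smoothPart r n) := mul_dvd_mul hord hpm
    _ = n := Nat.mul_div_cancel' (smoothPart_dvd r n)

end Nat

@[simps]
noncomputable def Nat.rpowHom (x : ℝ) : ℕ →* ℝ where
  toFun n := (n : ℝ) ^ x
  map_one' := by simp
  map_mul' m n := by push_cast; exact Real.mul_rpow m.cast_nonneg n.cast_nonneg

lemma sum_le_prod_primes_one_sub_inv {f : ℕ →* ℝ} (hf0 : ∀ n, 0 ≤ f n)
    (hf1 : ∀ p : ℕ, p.Prime → f p < 1) (s : Finset ℕ) {t : Finset ℕ}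
    (ht : ↑t ⊆ Nat.factoredNumbers s) :
    ∑ m ∈ t, f m ≤ ∏ p ∈ s with p.Prime, (1 - f p)⁻¹ := by
  have hnorm {p : ℕ} (hp : p.Prime) : ‖f p‖ < 1 := by
    rw [Real.norm_of_nonneg (hf0 p)]; exact hf1 p hp
  have hsum :=
    (EulerProduct.summable_and_hasSum_factoredNumbers_prod_filter_prime_geometric hnorm s).2
  calc ∑ m ∈ t, f m = ∑ m ∈ t.subtype (· ∈ Nat.factoredNumbers s), f m :=
        (sum_subtype_of_mem _ fun _ hm ↦ ht hm).symm
    _ ≤ _ := sum_le_hasSum _ (fun _ _ ↦ hf0 _) hsum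

lemma eventually_one_sub_rpow_neg_inv_le_rpow {s ε : ℝ} (hs : 0 < s) (hε : 0 < ε) :
    ∀ᶠ p : ℕ in atTop, (1 - (p : ℝ) ^ (-s))⁻¹ ≤ (p : ℝ) ^ ε := by
  have hsmall : ∀ᶠ p : ℕ in atTop, (p : ℝ) ^ (-s) ≤ 1 / 2 :=
    ((tendsto_rpow_neg_atTop hs).comp tendsto_natCast_atTop_atTop).eventually
      (ge_mem_nhds (by norm_num))
  have hlarge : ∀ᶠ p : ℕ in atTop, 2 ≤ (p : ℝ) ^ ε :=
    ((tendsto_rpow_atTop hε).comp tendsto_natCast_atTop_atTop).eventually_ge_atTop 2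
  filter_upwards [hsmall, hlarge] with p hp hp'
  calc (1 - (p : ℝ) ^ (-s))⁻¹ ≤ (1 / 2)⁻¹ := inv_anti₀ (by norm_num) (by linarith)
    _ ≤ (p : ℝ) ^ ε := by norm_num [hp']

lemma prod_primeFactors_le_pow_mul_rpow {f : ℕ → ℝ} {c ε : ℝ} {P : ℕ} {r : ℕ} (hr : r ≠ 0)
    (hc : 1 ≤ c) (hε : 0 ≤ ε) (hf0 : ∀ p, p.Prime → 0 ≤ f p) (hfc : ∀ p, p.Prime → f p ≤ c)
    (hfP : ∀ p, p.Prime → P ≤ p → f p ≤ (p : ℝ) ^ ε) :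
    ∏ p ∈ r.primeFactors, f p ≤ c ^ P * (r : ℝ) ^ ε := by
  rw [← prod_filter_mul_prod_filter_not r.primeFactors (· < P)]
  have hsmall : ∏ p ∈ r.primeFactors with p < P, f p ≤ c ^ P :=
    calc ∏ p ∈ r.primeFactors with p < P, f p
        ≤ c ^ #{p ∈ r.primeFactors | p < P} :=
          (prod_le_prod (fun p hp ↦ hf0 p (Nat.prime_of_mem_primeFactors (mem_filter.mp hp).1))
            fun p hp ↦ hfc p (Nat.prime_of_mem_primeFactors (mem_filter.mp hp).1)).trans_eq
            (prod_const c)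
      _ ≤ c ^ P := by
          refine pow_le_pow_right₀ hc ((card_le_card fun p hp ↦ ?_).trans (card_range P).le)
          exact mem_range.mpr (mem_filter.mp hp).2
  have hlarge : ∏ p ∈ r.primeFactors with ¬ p < P, f p ≤ (r : ℝ) ^ ε :=
    calc ∏ p ∈ r.primeFactors with ¬ p < P, f p
        ≤ ∏ p ∈ r.primeFactors with ¬ p < P, (p : ℝ) ^ ε := by
          refine prod_le_prod (fun p hp ↦ ?_) fun p hp ↦ ?_ <;>
            obtain ⟨hp, hPp⟩ := mem_filter.mp hp
          · exact hf0 p (Nat.prime_of_mem_primeFactors hp)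
          · exact hfP p (Nat.prime_of_mem_primeFactors hp) (not_lt.mp hPp)
      _ = ((∏ p ∈ r.primeFactors with ¬ p < P, p : ℕ) : ℝ) ^ ε := by
          rw [Nat.cast_prod, Real.finsetProd_rpow _ _ fun p _ ↦ p.cast_nonneg]
      _ ≤ (r : ℝ) ^ ε := by
          refine Real.rpow_le_rpow (Nat.cast_nonneg _) ?_ hε
          exact_mod_cast Nat.le_of_dvd (Nat.pos_of_ne_zero hr)
            ((prod_dvd_prod_of_subset _ _ _ (filter_subset _ _)).trans
              (Nat.prod_primeFactors_dvd r))
  exact mul_le_mul hsmall hlarge (prod_nonneg fun p hp ↦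
    hf0 p (Nat.prime_of_mem_primeFactors (mem_filter.mp hp).1)) (by positivity)

lemma exists_sum_rpow_neg_le_mul_rpow {s ε : ℝ} (hs : 0 < s) (hε : 0 < ε) :
    ∃ K : ℝ, 0 ≤ K ∧ ∀ r : ℕ, r ≠ 0 → ∀ t : Finset ℕ, ↑t ⊆ Nat.factoredNumbers r.primeFactors →
      ∑ a ∈ t, (a : ℝ) ^ (-s) ≤ K * (r : ℝ) ^ ε := by
  obtain ⟨P, hP⟩ := eventually_atTop.mp (eventually_one_sub_rpow_neg_inv_le_rpow hs hε)
  have h2 : (2 : ℝ) ^ (-s) < 1 := Real.rpow_lt_one_of_one_lt_of_neg one_lt_two (neg_neg_of_pos hs)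
  refine ⟨(1 - 2 ^ (-s))⁻¹ ^ P, by have := sub_pos.mpr h2; positivity, fun r hr t ht ↦ ?_⟩
  have hfac {p : ℕ} (hp : p.Prime) :
      0 < 1 - (p : ℝ) ^ (-s) ∧ (1 - (p : ℝ) ^ (-s))⁻¹ ≤ (1 - 2 ^ (-s))⁻¹ := by
    have : (p : ℝ) ^ (-s) ≤ 2 ^ (-s) :=
      Real.rpow_le_rpow_of_nonpos two_pos (by exact_mod_cast hp.two_le) (neg_nonpos.mpr hs.le)
    exact ⟨by linarith, inv_anti₀ (by linarith) (by linarith)⟩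
  calc ∑ a ∈ t, (a : ℝ) ^ (-s) ≤ ∏ p ∈ r.primeFactors with p.Prime, (1 - (p : ℝ) ^ (-s))⁻¹ :=
        sum_le_prod_primes_one_sub_inv (f := Nat.rpowHom (-s))
          (fun n ↦ by rw [Nat.rpowHom_apply]; positivity)
          (fun p hp ↦ by rw [Nat.rpowHom_apply]; linarith [hfac hp]) _ ht
    _ = ∏ p ∈ r.primeFactors, (1 - (p : ℝ) ^ (-s))⁻¹ :=
        prod_congr (filter_true_of_mem fun p ↦ Nat.prime_of_mem_primeFactors) fun _ _ ↦ rfl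
    _ ≤ _ := prod_primeFactors_le_pow_mul_rpow hr
        (one_le_inv₀ (by linarith) |>.mpr (by linarith [Real.rpow_pos_of_pos two_pos (-s)]))
        hε.le (fun p hp ↦ (inv_pos.mpr (hfac hp).1).le) (fun p hp ↦ (hfac hp).2)
        (fun p _ hPp ↦ hP p hPp)

lemma sum_le_sqrt_mul_of_sum_sq_le {f : ℕ → ℝ} {C x : ℝ} (hx : 0 ≤ x)
    (h : ∑ n ∈ Icc 1 ⌊x⌋₊, f n ^ 2 ≤ C * x) : ∑ n ∈ Icc 1 ⌊x⌋₊, f n ≤ √C * x := by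
  have hcs : (∑ n ∈ Icc 1 ⌊x⌋₊, f n) ^ 2 ≤ C * x ^ 2 :=
    calc _ ≤ (⌊x⌋₊ : ℝ) * ∑ n ∈ Icc 1 ⌊x⌋₊, f n ^ 2 := by
          simpa using sq_sum_le_card_mul_sum_sq (s := Icc 1 ⌊x⌋₊) (f := f)
      _ ≤ x * (C * x) := mul_le_mul (Nat.floor_le hx) h (sum_nonneg fun _ _ ↦ sq_nonneg _) hx
      _ = C * x ^ 2 := by ring
  calc _ ≤ |∑ n ∈ Icc 1 ⌊x⌋₊, f n| := le_abs_self _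
    _ ≤ √(C * x ^ 2) := Real.abs_le_sqrt hcs
    _ = √C * x := by rw [Real.sqrt_mul' C (sq_nonneg x), Real.sqrt_sq hx]

lemma sum_smoothPart_le_sum_factoredNumbers_sum {r : ℕ} (hr : r ≠ 0) (M : ℕ)
    {F : ℕ → ℕ → ℝ} (hF : ∀ a b, 0 ≤ F a b) :
    ∑ n ∈ Icc 1 M, F (Nat.smoothPart r n) (n / Nat.smoothPart r n) ≤
      ∑ a ∈ Icc 1 M with a ∈ Nat.factoredNumbers r.primeFactors, ∑ b ∈ Icc 1 (M / a), F a b := by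
  let e : ℕ → Σ _ : ℕ, ℕ := fun n ↦ ⟨Nat.smoothPart r n, n / Nat.smoothPart r n⟩
  have he : Set.InjOn e (Icc 1 M) := fun x _ y _ hxy ↦ by
    obtain ⟨h₁, h₂⟩ := Sigma.mk.inj_iff.mp hxy
    rw [← Nat.mul_div_cancel' (Nat.smoothPart_dvd r x),
      ← Nat.mul_div_cancel' (Nat.smoothPart_dvd r y), eq_of_heq h₂, h₁]
  have hmaps : (Icc 1 M).image e ⊆
      {a ∈ Icc 1 M | a ∈ Nat.factoredNumbers r.primeFactors}.sigma fun a ↦ Icc 1 (M / a) := by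
    simp only [subset_iff, mem_image, mem_sigma, mem_filter, mem_Icc]
    rintro _ ⟨n, ⟨hn1, hnM⟩, rfl⟩
    have hpos := Nat.smoothPart_pos (r := r) hn1
    have hle := Nat.le_of_dvd hn1 (Nat.smoothPart_dvd r n)
    exact ⟨⟨⟨hpos, hle.trans hnM⟩, Nat.smoothPart_mem_factoredNumbers hr⟩,
      Nat.div_pos hle hpos, Nat.div_le_div_right hnM⟩
  calc _ = ∑ q ∈ (Icc 1 M).image e, F q.1 q.2 := (sum_image he).symm
    _ ≤ _ := sum_le_sum_of_subset_of_nonneg hmaps fun _ _ _ ↦ hF _ _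
    _ = _ := (sum_sigma' _ _ _).symm

section FourierCoefficients

variable {θ C : ℝ} {A : ℕ → ℕ → ℂ}

lemma norm_le_mul_norm_div_smoothPart
    (hmult : ∀ r n₁ n : ℕ, 0 < r → 0 < n₁ → 0 < n →
      (∀ p : ℕ, p.Prime → p ∣ n₁ → p ∣ r) → Nat.gcd n r = 1 →
      ‖A r (n₁ * n)‖ ≤ ‖A r n₁‖ * ‖A 1 n‖)
    (hram : ∀ r n₁ : ℕ, 0 < r → 0 < n₁ →
      (∀ p : ℕ, p.Prime → p ∣ n₁ → p ∣ r) →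
      ‖A r n₁‖ ≤ C * ((r * n₁ : ℕ) : ℝ) ^ θ)
    {r n : ℕ} (hr : 0 < r) (hn : 0 < n) :
    ‖A r n‖ ≤
      C * (r : ℝ) ^ θ * (Nat.smoothPart r n : ℝ) ^ θ * ‖A 1 (n / Nat.smoothPart r n)‖ := by
  have hpos := Nat.smoothPart_pos (r := r) hn
  have hsmooth : ∀ p : ℕ, p.Prime → p ∣ Nat.smoothPart r n → p ∣ r :=
    fun _ hp ↦ hp.dvd_of_dvd_smoothPart
  calc ‖A r n‖ = ‖A r (Nat.smoothPart r n * (n / Nat.smoothPart r n))‖ := by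
        rw [Nat.mul_div_cancel' (Nat.smoothPart_dvd r n)]
    _ ≤ ‖A r (Nat.smoothPart r n)‖ * ‖A 1 (n / Nat.smoothPart r n)‖ :=
        hmult r _ _ hr hpos (Nat.div_pos (Nat.le_of_dvd hn (Nat.smoothPart_dvd r n)) hpos)
          hsmooth (Nat.coprime_div_smoothPart hn.ne')
    _ ≤ _ := by
        gcongr
        refine (hram r _ hr hpos hsmooth).trans_eq ?_
        rw [Nat.cast_mul, Real.mul_rpow r.cast_nonneg (Nat.cast_nonneg _), mul_assoc]

lemma sum_norm_le_sum_factoredNumbers_rpow (hC : 0 ≤ C)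
    (hmult : ∀ r n₁ n : ℕ, 0 < r → 0 < n₁ → 0 < n →
      (∀ p : ℕ, p.Prime → p ∣ n₁ → p ∣ r) → Nat.gcd n r = 1 →
      ‖A r (n₁ * n)‖ ≤ ‖A r n₁‖ * ‖A 1 n‖)
    (hram : ∀ r n₁ : ℕ, 0 < r → 0 < n₁ →
      (∀ p : ℕ, p.Prime → p ∣ n₁ → p ∣ r) →
      ‖A r n₁‖ ≤ C * ((r * n₁ : ℕ) : ℝ) ^ θ)
    (hRS : ∀ x : ℝ, 1 ≤ x →
      ∑ n ∈ Finset.Icc 1 ⌊x⌋₊, ‖A 1 n‖ ^ 2 ≤ C * x)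
    {r : ℕ} (hr : 0 < r) (M : ℕ) :
    ∑ n ∈ Icc 1 M, ‖A r n‖ ≤ C * √C * (r : ℝ) ^ θ * M *
      ∑ a ∈ Icc 1 M with a ∈ Nat.factoredNumbers r.primeFactors, (a : ℝ) ^ (θ - 1) := by
  set F : ℕ → ℕ → ℝ := fun a b ↦ C * (r : ℝ) ^ θ * (a : ℝ) ^ θ * ‖A 1 b‖
  have hinner : ∀ a ∈ Icc 1 M, ∑ b ∈ Icc 1 (M / a), F a b ≤
      C * √C * (r : ℝ) ^ θ * M * (a : ℝ) ^ (θ - 1) := by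
    intro a ha
    obtain ⟨ha1, haM⟩ := mem_Icc.mp ha
    have hapos : (0 : ℝ) < a := by exact_mod_cast ha1
    have hx : (1 : ℝ) ≤ M / a := (one_le_div hapos).mpr (by exact_mod_cast haM)
    have hfloor : ⌊(M : ℝ) / a⌋₊ = M / a := Nat.floor_div_eq_div M a
    have hsum : ∑ b ∈ Icc 1 (M / a), ‖A 1 b‖ ≤ √C * (M / a) := by
      simpa only [hfloor] using sum_le_sqrt_mul_of_sum_sq_le (by linarith) (hRS _ hx)
    calc ∑ b ∈ Icc 1 (M / a), F a b
        = C * (r : ℝ) ^ θ * (a : ℝ) ^ θ * ∑ b ∈ Icc 1 (M / a), ‖A 1 b‖ := (mul_sum _ _ _).symm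
      _ ≤ C * (r : ℝ) ^ θ * (a : ℝ) ^ θ * (√C * (M / a)) := by gcongr
      _ = C * √C * (r : ℝ) ^ θ * M * (a : ℝ) ^ (θ - 1) := by
          rw [Real.rpow_sub_one hapos.ne']; ring
  calc ∑ n ∈ Icc 1 M, ‖A r n‖
        ≤ ∑ n ∈ Icc 1 M, F (Nat.smoothPart r n) (n / Nat.smoothPart r n) :=
        sum_le_sum fun n hn ↦ norm_le_mul_norm_div_smoothPart hmult hram hr (mem_Icc.mp hn).1
    _ ≤ ∑ a ∈ Icc 1 M with a ∈ Nat.factoredNumbers r.primeFactors, ∑ b ∈ Icc 1 (M / a), F a b :=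
        sum_smoothPart_le_sum_factoredNumbers_sum hr.ne' M fun _ _ ↦ by positivity
    _ ≤ ∑ a ∈ Icc 1 M with a ∈ Nat.factoredNumbers r.primeFactors,
          C * √C * (r : ℝ) ^ θ * M * (a : ℝ) ^ (θ - 1) :=
        sum_le_sum fun a ha ↦ hinner a (mem_filter.mp ha).1
    _ = _ := (mul_sum _ _ _).symm

end FourierCoefficients

theorem first_moment_bound_general (θ C : ℝ) (hθ1 : θ < 1) (hC : 1 ≤ C)
    (A : ℕ → ℕ → ℂ)
    (hmult : ∀ r n₁ n : ℕ, 0 < r → 0 < n₁ → 0 < n →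
      (∀ p : ℕ, p.Prime → p ∣ n₁ → p ∣ r) → Nat.gcd n r = 1 →
      ‖A r (n₁ * n)‖ ≤ ‖A r n₁‖ * ‖A 1 n‖)
    (hram : ∀ r n₁ : ℕ, 0 < r → 0 < n₁ →
      (∀ p : ℕ, p.Prime → p ∣ n₁ → p ∣ r) →
      ‖A r n₁‖ ≤ C * ((r * n₁ : ℕ) : ℝ) ^ θ)
    (hRS : ∀ x : ℝ, 1 ≤ x →
      ∑ n ∈ Finset.Icc 1 ⌊x⌋₊, ‖A 1 n‖ ^ 2 ≤ C * x) :
    ∀ ε : ℝ, 0 < ε → ∃ C' : ℝ, ∀ r : ℕ, 0 < r → ∀ N : ℝ, 1 ≤ N →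
      ∑ n ∈ Finset.Ioc ⌊N⌋₊ ⌊2 * N⌋₊, ‖A r n‖
        ≤ C' * (r : ℝ) ^ (θ + ε) * N := by
  intro ε hε
  obtain ⟨K, hK0, hK⟩ := exists_sum_rpow_neg_le_mul_rpow (sub_pos.mpr hθ1) hε
  refine ⟨2 * (C * √C * K), fun r hr N hN ↦ ?_⟩
  have hM : (⌊2 * N⌋₊ : ℝ) ≤ 2 * N := Nat.floor_le (by linarith)
  have hsmooth := hK r hr.ne' {a ∈ Icc 1 ⌊2 * N⌋₊ | a ∈ Nat.factoredNumbers r.primeFactors}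
    fun a ha ↦ (mem_filter.mp ha).2
  rw [neg_sub] at hsmooth
  calc ∑ n ∈ Ioc ⌊N⌋₊ ⌊2 * N⌋₊, ‖A r n‖ ≤ ∑ n ∈ Icc 1 ⌊2 * N⌋₊, ‖A r n‖ :=
        sum_le_sum_of_subset_of_nonneg (fun n hn ↦ by simp only [mem_Ioc, mem_Icc] at hn ⊢; omega)
          fun _ _ _ ↦ norm_nonneg _
    _ ≤ C * √C * (r : ℝ) ^ θ * ⌊2 * N⌋₊ *
          ∑ a ∈ Icc 1 ⌊2 * N⌋₊ with a ∈ Nat.factoredNumbers r.primeFactors, (a : ℝ) ^ (θ - 1) :=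
        sum_norm_le_sum_factoredNumbers_rpow (by linarith) hmult hram hRS hr _
    _ ≤ C * √C * (r : ℝ) ^ θ * (2 * N) * (K * (r : ℝ) ^ ε) := by gcongr
    _ = 2 * (C * √C * K) * (r : ℝ) ^ (θ + ε) * N := by
        rw [Real.rpow_add (by exact_mod_cast hr)]; ring

/-- **First-moment bound for `GL(3)` Fourier coefficients.**
Abstracting Hecke multiplicativity, the Ramanujan-type bound and the
Rankin–Selberg second moment, one has `∑_{N < n ≤ 2N} |A(r,n)| ≪_ε r^{θ+ε} N`. -/
theorem first_moment_bound (θ C : ℝ) (hθ0 : 0 ≤ θ) (hθ1 : θ < 1) (hC : 1 ≤ C)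
    (A : ℕ → ℕ → ℂ)
    (hmult : ∀ r n₁ n : ℕ, 0 < r → 0 < n₁ → 0 < n →
      (∀ p : ℕ, p.Prime → p ∣ n₁ → p ∣ r) → Nat.gcd n r = 1 →
      ‖A r (n₁ * n)‖ ≤ ‖A r n₁‖ * ‖A 1 n‖)
    (hram : ∀ r n₁ : ℕ, 0 < r → 0 < n₁ →
      (∀ p : ℕ, p.Prime → p ∣ n₁ → p ∣ r) →
      ‖A r n₁‖ ≤ C * ((r * n₁ : ℕ) : ℝ) ^ θ)
    (hRS : ∀ x : ℝ, 1 ≤ x →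
      ∑ n ∈ Finset.Icc 1 ⌊x⌋₊, ‖A 1 n‖ ^ 2 ≤ C * x) :
    ∀ ε : ℝ, 0 < ε → ∃ C' : ℝ, ∀ r : ℕ, 0 < r → ∀ N : ℝ, 1 ≤ N →
      ∑ n ∈ Finset.Ioc ⌊N⌋₊ ⌊2 * N⌋₊, ‖A r n‖
        ≤ C' * (r : ℝ) ^ (θ + ε) * N :=
  first_moment_bound_general θ C hθ1 hC A hmult hram hRS
end

section
/- Let 0 ≤ θ < 1/2 and C ≥ 1, and let A : ℤ₊ × ℤ₊ → ℂ satisfy: (i) |A(r, n₁·n)| ≤ |A(r, n₁)|·|A(1, n)| for all positive integers r, n₁, n such that every prime factor of n₁ divides r and gcd(n, r) = 1; (ii) |A(r, n₁)| ≤ C·(r·n₁)^θ for all positive integers r, n₁ such that every prime factor of n₁ divides r; (iii) ∑_{n ≤ x} |A(1,n)|² ≤ C·x for all real x ≥ 1. Then for every ε > 0 there exists a constant C′ = C′(C, θ, ε) such that for all positive integers r and all real N ≥ 1, ∑_{N < n ≤ 2N} |A(r,n)|² ≤ C′·r^{2θ+ε}·N. -/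
open Finset

private lemma sum_le_sum_inj {α β : Type*} [DecidableEq β] (S : Finset α) (T : Finset β)
    (φ : α → β) (hmem : ∀ a ∈ S, φ a ∈ T)
    (hinj : ∀ a ∈ S, ∀ b ∈ S, φ a = φ b → a = b)
    (f : α → ℝ) (g : β → ℝ) (hle : ∀ a ∈ S, f a ≤ g (φ a)) (hg : ∀ b ∈ T, 0 ≤ g b) :
    ∑ a ∈ S, f a ≤ ∑ b ∈ T, g b := by
  calc ∑ a ∈ S, f a ≤ ∑ a ∈ S, g (φ a) := Finset.sum_le_sum hle
    _ = ∑ b ∈ S.image φ, g b := (Finset.sum_image hinj).symm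
    _ ≤ ∑ b ∈ T, g b := by
        refine Finset.sum_le_sum_of_subset_of_nonneg ?_ (fun b hb _ => hg b hb)
        intro b hb
        obtain ⟨a, ha, rfl⟩ := Finset.mem_image.mp hb
        exact hmem a ha

private lemma geo_le {q : ℝ} (h0 : 0 ≤ q) (h1 : q < 1) (K : ℕ) :
    ∑ k ∈ Finset.range K, q ^ k ≤ (1 - q)⁻¹ := by
  rw [geom_sum_eq h1.ne K]
  have h : (q ^ K - 1) / (q - 1) = (1 - q ^ K) / (1 - q) := by
    rw [← neg_div_neg_eq]; ring_nf
  rw [h, ← one_div]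
  have hq : 0 < 1 - q := by linarith
  gcongr
  nlinarith [pow_nonneg h0 K]

private lemma pow_rpow_comm {x : ℝ} (hx : 0 ≤ x) (k : ℕ) (σ : ℝ) :
    ((x ^ k) : ℝ) ^ σ = (x ^ σ) ^ k := by
  rw [← Real.rpow_natCast x k, ← Real.rpow_mul hx, mul_comm, Real.rpow_mul hx,
    Real.rpow_natCast]

open scoped Classical in
private lemma smooth_sum_le {σ : ℝ} (hσ : σ < 0) (M : ℕ) (P : Finset ℕ)
    (hP : ∀ p ∈ P, p.Prime) :
    ∑ n ∈ (Finset.Icc 1 M).filter (fun n => ∀ p, p.Prime → p ∣ n → p ∈ P), (n : ℝ) ^ σ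
      ≤ ∏ p ∈ P, (1 - (p : ℝ) ^ σ)⁻¹ := by
  classical
  induction P using Finset.induction_on with
  | empty =>
    simp only [Finset.prod_empty]
    have hsub : (Finset.Icc 1 M).filter (fun n => ∀ p, p.Prime → p ∣ n → p ∈ (∅ : Finset ℕ))
        ⊆ {1} := by
      intro n hn
      rw [Finset.mem_filter, Finset.mem_Icc] at hn
      rcases eq_or_ne n 1 with h | h
      · simp [h]
      · obtain ⟨p, hp, hpd⟩ := Nat.exists_prime_and_dvd h
        exact absurd (hn.2 p hp hpd) (by simp)
    refine le_trans
      (Finset.sum_le_sum_of_subset_of_nonneg hsub (fun n _ _ => by positivity)) ?_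
    simp
  | @insert a P' hpP ih =>
    have ha : a.Prime := hP a (Finset.mem_insert_self a P')
    have hP' : ∀ p ∈ P', p.Prime := fun p hp => hP p (Finset.mem_insert_of_mem hp)
    have ha1 : (1:ℝ) < (a:ℝ) := by exact_mod_cast ha.one_lt
    have hq0 : (0:ℝ) ≤ (a:ℝ) ^ σ := Real.rpow_nonneg (by positivity) σ
    have hq1 : (a:ℝ) ^ σ < 1 := Real.rpow_lt_one_of_one_lt_of_neg ha1 hσ
    set S' := (Finset.Icc 1 M).filter (fun n => ∀ p, p.Prime → p ∣ n → p ∈ P') with hS'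
    have key : ∑ n ∈ (Finset.Icc 1 M).filter
          (fun n => ∀ p, p.Prime → p ∣ n → p ∈ insert a P'), (n : ℝ) ^ σ
        ≤ ∑ x ∈ (Finset.range (M+1)) ×ˢ S', ((a:ℝ)^σ)^x.1 * (x.2:ℝ)^σ := by
      apply sum_le_sum_inj _ _
        (fun n => (n.factorization a, ordCompl[a] n))
      · intro n hn
        rw [Finset.mem_filter, Finset.mem_Icc] at hn
        have hn0 : n ≠ 0 := by omega
        rw [Finset.mem_product]
        constructor
        · rw [Finset.mem_range]
          have h1 : a ^ n.factorization a ∣ n := Nat.ordProj_dvd n a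
          have h2 : n.factorization a < a ^ n.factorization a :=
            Nat.lt_pow_self ha.one_lt
          have := Nat.le_of_dvd (by omega) h1
          omega
        · rw [hS', Finset.mem_filter, Finset.mem_Icc]
          refine ⟨⟨Nat.ordCompl_pos a hn0, le_trans (Nat.ordCompl_le n a) hn.1.2⟩, ?_⟩
          intro q hq hqd
          have hqn : q ∣ n := hqd.trans (Nat.ordCompl_dvd n a)
          have := hn.2 q hq hqn
          rcases Finset.mem_insert.mp this with h | h
          · exfalso
            exact Nat.not_dvd_ordCompl ha hn0 (h ▸ hqd)
          · exact h
      · intro x hx y hy hxy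
        rw [Finset.mem_filter, Finset.mem_Icc] at hx hy
        have hx0 : x ≠ 0 := by omega
        have hy0 : y ≠ 0 := by omega
        have ex : a ^ x.factorization a * ordCompl[a] x = x :=
          Nat.ordProj_mul_ordCompl_eq_self x a
        have ey : a ^ y.factorization a * ordCompl[a] y = y :=
          Nat.ordProj_mul_ordCompl_eq_self y a
        rw [Prod.mk.injEq] at hxy
        rw [← ex, ← ey, hxy.2, hxy.1]
      · intro n hn
        rw [Finset.mem_filter, Finset.mem_Icc] at hn
        have hn0 : n ≠ 0 := by omega
        have ex : a ^ n.factorization a * ordCompl[a] n = n :=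
          Nat.ordProj_mul_ordCompl_eq_self n a
        have hcast : (n:ℝ) = ((a:ℝ) ^ n.factorization a) * (((ordCompl[a] n : ℕ)) : ℝ) := by
          rw [← Nat.cast_pow, ← Nat.cast_mul, ex]
        rw [hcast, Real.mul_rpow (by positivity) (by positivity),
          pow_rpow_comm (by positivity) _ σ]
      · intro b _; positivity
    refine key.trans ?_
    have hprod : ∑ x ∈ (Finset.range (M+1)) ×ˢ S', ((a:ℝ)^σ)^x.1 * (x.2:ℝ)^σ
        = (∑ k ∈ Finset.range (M+1), ((a:ℝ)^σ)^k) * (∑ m ∈ S', (m:ℝ)^σ) := by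
      rw [Finset.sum_product, Finset.sum_mul_sum]
    rw [hprod, Finset.prod_insert hpP]
    have h1 : ∑ k ∈ Finset.range (M+1), ((a:ℝ)^σ)^k ≤ (1 - (a:ℝ)^σ)⁻¹ :=
      geo_le hq0 hq1 (M+1)
    have h2 : ∑ m ∈ S', (m:ℝ)^σ ≤ ∏ p ∈ P', (1 - (p:ℝ)^σ)⁻¹ := ih hP'
    have hnn : (0:ℝ) ≤ ∑ m ∈ S', (m:ℝ)^σ :=
      Finset.sum_nonneg (fun m _ => by positivity)
    have hpos : (0:ℝ) ≤ (1 - (a:ℝ)^σ)⁻¹ := by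
      rw [inv_nonneg]; linarith
    exact mul_le_mul h1 h2 hnn hpos



private lemma real_one_le_prod {s : Finset ℕ} {f : ℕ → ℝ} (h : ∀ i ∈ s, 1 ≤ f i) :
    1 ≤ ∏ i ∈ s, f i :=
  calc (1:ℝ) = ∏ _i ∈ s, 1 := by simp
    _ ≤ ∏ i ∈ s, f i := Finset.prod_le_prod (by norm_num) h

private lemma real_prod_le_prod_subset {s t : Finset ℕ} (h : s ⊆ t) {f : ℕ → ℝ}
    (hf : ∀ i ∈ t, 1 ≤ f i) : ∏ i ∈ s, f i ≤ ∏ i ∈ t, f i := by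
  rw [← Finset.prod_sdiff h]
  have h1 : 1 ≤ ∏ i ∈ t \ s, f i :=
    real_one_le_prod (fun i hi => hf i (Finset.mem_sdiff.mp hi).1)
  have h2 : (0:ℝ) ≤ ∏ i ∈ s, f i :=
    le_trans zero_le_one (real_one_le_prod (fun i hi => hf i (h hi)))
  nlinarith

private lemma prod_bound {σ ε : ℝ} (hσ : σ < 0) (hε : 0 < ε) :
    ∃ C₀ : ℝ, 1 ≤ C₀ ∧ ∀ r : ℕ, 0 < r →
      ∏ p ∈ r.primeFactors, (1 - (p : ℝ) ^ σ)⁻¹ ≤ C₀ * (r : ℝ) ^ ε := by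
  classical
  -- basic facts about the factors
  have hfac : ∀ p : ℕ, p.Prime → (0 : ℝ) < 1 - (p : ℝ) ^ σ ∧ 1 ≤ (1 - (p : ℝ) ^ σ)⁻¹ := by
    intro p hp
    have h1 : (1:ℝ) < (p:ℝ) := by exact_mod_cast hp.one_lt
    have h2 : (p:ℝ) ^ σ < 1 := Real.rpow_lt_one_of_one_lt_of_neg h1 hσ
    have h3 : (0:ℝ) ≤ (p:ℝ) ^ σ := Real.rpow_nonneg (by positivity) σ
    constructor
    · linarith
    · exact (one_le_inv₀ (by linarith)).mpr (by linarith)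
  obtain ⟨P₀, hP₀⟩ := exists_nat_ge (max ((2:ℝ) ^ (1/(-σ))) ((2:ℝ) ^ (1/ε)))
  -- for large primes, the factor is at most `p ^ ε`
  have hlarge : ∀ p : ℕ, p.Prime → P₀ ≤ p → (1 - (p : ℝ) ^ σ)⁻¹ ≤ (p : ℝ) ^ ε := by
    intro p hp hPp
    have hp1 : (1:ℝ) ≤ (p:ℝ) := by exact_mod_cast hp.one_lt.le
    have hpP : ((2:ℝ) ^ (1/(-σ))) ≤ (p:ℝ) :=
      le_trans (le_trans (le_max_left _ _) hP₀) (by exact_mod_cast hPp)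
    have hpE : ((2:ℝ) ^ (1/ε)) ≤ (p:ℝ) :=
      le_trans (le_trans (le_max_right _ _) hP₀) (by exact_mod_cast hPp)
    have hσ' : 0 < -σ := by linarith
    -- p ^ ε ≥ 2
    have h2 : (2:ℝ) ≤ (p:ℝ) ^ ε := by
      have := Real.rpow_le_rpow (by positivity) hpE hε.le
      rwa [← Real.rpow_mul (by norm_num), one_div_mul_cancel hε.ne', Real.rpow_one] at this
    -- p ^ σ ≤ 1/2
    have h3 : (p:ℝ) ^ σ ≤ 1/2 := by
      have h4 : (2:ℝ) ≤ (p:ℝ) ^ (-σ) := by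
        have := Real.rpow_le_rpow (by positivity) hpP hσ'.le
        rwa [← Real.rpow_mul (by norm_num), one_div_mul_cancel hσ'.ne', Real.rpow_one] at this
      have h5 : (p:ℝ) ^ σ = ((p:ℝ) ^ (-σ))⁻¹ := by
        rw [← Real.rpow_neg (by positivity), neg_neg]
      rw [h5]
      rw [inv_le_comm₀ (by linarith) (by norm_num)]
      linarith
    have h6 : (1:ℝ)/2 ≤ 1 - (p:ℝ)^σ := by linarith
    have h7 : (1 - (p:ℝ)^σ)⁻¹ ≤ 2 := by
      rw [inv_le_comm₀ (by linarith) (by norm_num)]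
      linarith
    linarith
  refine ⟨∏ p ∈ (Finset.range P₀).filter Nat.Prime, (1 - (p : ℝ) ^ σ)⁻¹, ?_, ?_⟩
  · exact real_one_le_prod (fun p hp =>
      (hfac p (Finset.mem_filter.mp hp).2).2)
  intro r hr
  set PF := r.primeFactors with hPF
  have hprime : ∀ p ∈ PF, p.Prime := fun p hp => Nat.prime_of_mem_primeFactors hp
  rw [← Finset.prod_filter_mul_prod_filter_not PF (fun p => p < P₀)]
  have hA : ∏ p ∈ PF.filter (fun p => p < P₀), (1 - (p : ℝ) ^ σ)⁻¹
      ≤ ∏ p ∈ (Finset.range P₀).filter Nat.Prime, (1 - (p : ℝ) ^ σ)⁻¹ := by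
    apply real_prod_le_prod_subset
    · intro p hp
      rw [Finset.mem_filter] at hp ⊢
      exact ⟨Finset.mem_range.mpr hp.2, hprime p hp.1⟩
    · intro p hp
      exact (hfac p (Finset.mem_filter.mp hp).2).2
  have hB : ∏ p ∈ PF.filter (fun p => ¬ p < P₀), (1 - (p : ℝ) ^ σ)⁻¹
      ≤ (r : ℝ) ^ ε := by
    have step1 : ∏ p ∈ PF.filter (fun p => ¬ p < P₀), (1 - (p : ℝ) ^ σ)⁻¹
        ≤ ∏ p ∈ PF.filter (fun p => ¬ p < P₀), (p : ℝ) ^ ε := by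
      apply Finset.prod_le_prod
      · intro p hp
        have := (hfac p (hprime p (Finset.mem_filter.mp hp).1)).1
        positivity
      · intro p hp
        rw [Finset.mem_filter] at hp
        exact hlarge p (hprime p hp.1) (by omega)
    have step2 : ∏ p ∈ PF.filter (fun p => ¬ p < P₀), (p : ℝ) ^ ε
        ≤ ∏ p ∈ PF, (p : ℝ) ^ ε := by
      apply real_prod_le_prod_subset (Finset.filter_subset _ _)
      intro p hp
      have hp2 : (1:ℝ) ≤ (p:ℝ) := by exact_mod_cast (hprime p hp).one_lt.le
      exact Real.one_le_rpow hp2 hε.le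
    have step3 : ∏ p ∈ PF, (p : ℝ) ^ ε = ((∏ p ∈ PF, p : ℕ) : ℝ) ^ ε := by
      rw [Real.finset_prod_rpow _ _ (fun p _ => by positivity), Nat.cast_prod]
    have step4 : ((∏ p ∈ PF, p : ℕ) : ℝ) ^ ε ≤ (r : ℝ) ^ ε := by
      apply Real.rpow_le_rpow (by positivity) _ hε.le
      exact_mod_cast Nat.le_of_dvd hr (Nat.prod_primeFactors_dvd r)
    calc _ ≤ _ := step1
      _ ≤ _ := step2
      _ = _ := step3
      _ ≤ _ := step4
  have h0A : (0:ℝ) ≤ ∏ p ∈ PF.filter (fun p => ¬ p < P₀), (1 - (p : ℝ) ^ σ)⁻¹ :=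
    Finset.prod_nonneg (fun p hp => by
      have := (hfac p (hprime p (Finset.mem_filter.mp hp).1)).1; positivity)
  have h1A : (1:ℝ) ≤ ∏ p ∈ (Finset.range P₀).filter Nat.Prime, (1 - (p : ℝ) ^ σ)⁻¹ :=
    real_one_le_prod (fun p hp => (hfac p (Finset.mem_filter.mp hp).2).2)
  exact mul_le_mul hA hB h0A (by linarith)


private lemma term_eq {C θ N : ℝ} {r n₁ : ℕ} (hr : 0 < r) (hn : 0 < n₁) :
    (C * ((r * n₁ : ℕ) : ℝ) ^ θ) ^ 2 * (C * (2 * N / (n₁ : ℝ)))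
      = (2 * C ^ 3 * N) * ((r : ℝ) ^ (2 * θ) * (n₁ : ℝ) ^ (2 * θ - 1)) := by
  have hr0 : (0:ℝ) < r := by exact_mod_cast hr
  have hn0 : (0:ℝ) < n₁ := by exact_mod_cast hn
  have hx : ((r * n₁ : ℕ) : ℝ) = (r : ℝ) * (n₁ : ℝ) := by push_cast; ring
  have sq : ∀ x : ℝ, 0 ≤ x → (x ^ θ) ^ (2:ℕ) = x ^ (2 * θ) := by
    intro x hx0
    rw [← Real.rpow_natCast (x ^ θ) 2, ← Real.rpow_mul hx0]
    norm_num [mul_comm]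
  rw [hx, Real.mul_rpow hr0.le hn0.le, mul_pow, mul_pow, sq _ hr0.le, sq _ hn0.le,
    Real.rpow_sub hn0, Real.rpow_one]
  field_simp

/-- **Second-moment bound for `GL(3)` Fourier coefficients.**
Abstracting Hecke multiplicativity, the Ramanujan-type bound and the
Rankin–Selberg second moment, one has `∑_{N < n ≤ 2N} |A(r,n)|² ≪_ε r^{2θ+ε} N`. -/
theorem second_moment_bound (θ C : ℝ) (hθ0 : 0 ≤ θ) (hθ1 : θ < 1 / 2) (hC : 1 ≤ C)
    (A : ℕ → ℕ → ℂ)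
    (hmult : ∀ r n₁ n : ℕ, 0 < r → 0 < n₁ → 0 < n →
      (∀ p : ℕ, p.Prime → p ∣ n₁ → p ∣ r) → Nat.gcd n r = 1 →
      ‖A r (n₁ * n)‖ ≤ ‖A r n₁‖ * ‖A 1 n‖)
    (hram : ∀ r n₁ : ℕ, 0 < r → 0 < n₁ →
      (∀ p : ℕ, p.Prime → p ∣ n₁ → p ∣ r) →
      ‖A r n₁‖ ≤ C * ((r * n₁ : ℕ) : ℝ) ^ θ)
    (hRS : ∀ x : ℝ, 1 ≤ x →
      ∑ n ∈ Finset.Icc 1 ⌊x⌋₊, ‖A 1 n‖ ^ 2 ≤ C * x) :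
    ∀ ε : ℝ, 0 < ε → ∃ C' : ℝ, ∀ r : ℕ, 0 < r → ∀ N : ℝ, 1 ≤ N →
      ∑ n ∈ Finset.Ioc ⌊N⌋₊ ⌊2 * N⌋₊, ‖A r n‖ ^ 2
        ≤ C' * (r : ℝ) ^ (2 * θ + ε) * N := by
  classical
  intro ε hε
  have hσ : 2 * θ - 1 < 0 := by linarith
  obtain ⟨C₀, hC₀1, hC₀⟩ := prod_bound hσ hε
  refine ⟨2 * C ^ 3 * C₀, ?_⟩
  intro r hr N hN
  have hr0 : (0:ℝ) < r := by exact_mod_cast hr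
  have h2N1 : (1:ℝ) ≤ 2 * N := by linarith
  set M := ⌊2 * N⌋₊ with hM
  have hM2N : (M : ℝ) ≤ 2 * N := Nat.floor_le (by linarith)
  set S' := (Finset.Icc 1 M).filter (fun n₁ => ∀ p, p.Prime → p ∣ n₁ → p ∣ r) with hS'
  set T := S'.sigma (fun n₁ => Finset.Icc 1 ⌊2 * N / (n₁ : ℝ)⌋₊) with hT
  -- Step 1: inject `n ↦ (gcd(n, r^n), n / gcd(n, r^n))`
  have step1 : ∑ n ∈ Finset.Ioc ⌊N⌋₊ M, ‖A r n‖ ^ 2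
      ≤ ∑ x ∈ T, (C * ((r * x.1 : ℕ) : ℝ) ^ θ) ^ 2 * ‖A 1 x.2‖ ^ 2 := by
    apply sum_le_sum_inj _ _ (fun n => ⟨n.gcd (r ^ n), n / n.gcd (r ^ n)⟩)
    · -- membership
      intro n hn
      rw [Finset.mem_Ioc] at hn
      have hn0 : 0 < n := lt_of_le_of_lt (Nat.zero_le _) hn.1
      have hd0 : 0 < n.gcd (r ^ n) := Nat.gcd_pos_of_pos_left _ hn0
      have hdn : n.gcd (r ^ n) ∣ n := Nat.gcd_dvd_left _ _
      have hdM : n.gcd (r ^ n) ≤ M := le_trans (Nat.le_of_dvd hn0 hdn) hn.2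
      rw [hT, Finset.mem_sigma]
      constructor
      · rw [hS', Finset.mem_filter, Finset.mem_Icc]
        exact ⟨⟨hd0, hdM⟩, fun p hp hpd =>
          hp.dvd_of_dvd_pow (hpd.trans (Nat.gcd_dvd_right _ _))⟩
      · rw [Finset.mem_Icc]
        have hm0 : 0 < n / n.gcd (r ^ n) := Nat.div_pos (Nat.le_of_dvd hn0 hdn) hd0
        refine ⟨hm0, Nat.le_floor ?_⟩
        have hd0R : (0:ℝ) < (n.gcd (r ^ n) : ℝ) := by exact_mod_cast hd0
        rw [le_div_iff₀ hd0R]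
        have : (n / n.gcd (r ^ n)) * n.gcd (r ^ n) = n := Nat.div_mul_cancel hdn
        calc ((n / n.gcd (r ^ n) : ℕ) : ℝ) * (n.gcd (r ^ n) : ℝ)
            = ((n / n.gcd (r ^ n) * n.gcd (r ^ n) : ℕ) : ℝ) := by push_cast; ring
          _ = (n : ℝ) := by rw [this]
          _ ≤ (M : ℝ) := by exact_mod_cast hn.2
          _ ≤ 2 * N := hM2N
    · -- injectivity
      intro a ha b hb hab
      rw [Finset.mem_Ioc] at ha hb
      have ha0 : 0 < a := lt_of_le_of_lt (Nat.zero_le _) ha.1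
      have hb0 : 0 < b := lt_of_le_of_lt (Nat.zero_le _) hb.1
      have ea : a.gcd (r ^ a) * (a / a.gcd (r ^ a)) = a :=
        Nat.mul_div_cancel' (Nat.gcd_dvd_left _ _)
      have eb : b.gcd (r ^ b) * (b / b.gcd (r ^ b)) = b :=
        Nat.mul_div_cancel' (Nat.gcd_dvd_left _ _)
      rw [Sigma.mk.inj_iff, heq_iff_eq] at hab
      rw [← ea, ← eb, hab.2, hab.1]
    · -- pointwise bound
      intro n hn
      rw [Finset.mem_Ioc] at hn
      have hn0 : 0 < n := lt_of_le_of_lt (Nat.zero_le _) hn.1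
      set d := n.gcd (r ^ n) with hd
      have hd0 : 0 < d := Nat.gcd_pos_of_pos_left _ hn0
      have hdn : d ∣ n := Nat.gcd_dvd_left _ _
      have hdr : d ∣ r ^ n := Nat.gcd_dvd_right _ _
      have hrn0 : r ^ n ≠ 0 := pow_ne_zero _ (by omega)
      have hsm : ∀ p, p.Prime → p ∣ d → p ∣ r := fun p hp hpd =>
        hp.dvd_of_dvd_pow (hpd.trans hdr)
      set m := n / d with hm
      have hm0 : 0 < m := Nat.div_pos (Nat.le_of_dvd hn0 hdn) hd0
      have hdm : d * m = n := Nat.mul_div_cancel' hdn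
      have hcop : Nat.gcd m r = 1 := by
        by_contra hne
        obtain ⟨p, hp, hpd⟩ := Nat.exists_prime_and_dvd hne
        have hpm : p ∣ m := hpd.trans (Nat.gcd_dvd_left _ _)
        have hpr : p ∣ r := hpd.trans (Nat.gcd_dvd_right _ _)
        have hfd : d.factorization p = n.factorization p := by
          have h1 : d.factorization = n.factorization ⊓ (r ^ n).factorization :=
            Nat.factorization_gcd (by omega) hrn0
          have h2 : (r ^ n).factorization p = n * r.factorization p := by
            rw [Nat.factorization_pow]; simp
          have h3 : 1 ≤ r.factorization p :=
            hp.factorization_pos_of_dvd (by omega) hpr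
          have h4 : n.factorization p < n := Nat.factorization_lt p (by omega)
          rw [h1, Finsupp.inf_apply, h2]
          exact min_eq_left (by nlinarith)
        have hfm : m.factorization p = 0 := by
          rw [hm, Nat.factorization_div hdn, Finsupp.tsub_apply, hfd]
          omega
        have : 1 ≤ m.factorization p :=
          hp.factorization_pos_of_dvd (by omega) hpm
        omega
      have h1 := hmult r d m hr hd0 hm0 hsm hcop
      have h2 := hram r d hr hd0 hsm
      have habs : ‖A r n‖ ≤ (C * ((r * d : ℕ) : ℝ) ^ θ) * ‖A 1 m‖ := by
        rw [← hdm]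
        exact le_trans h1 (mul_le_mul_of_nonneg_right h2 (norm_nonneg _))
      calc ‖A r n‖ ^ 2
          ≤ ((C * ((r * d : ℕ) : ℝ) ^ θ) * ‖A 1 m‖) ^ 2 :=
            pow_le_pow_left₀ (norm_nonneg _) habs 2
        _ = (C * ((r * d : ℕ) : ℝ) ^ θ) ^ 2 * ‖A 1 m‖ ^ 2 := mul_pow _ _ 2
    · intro b _; positivity
  -- Step 2: sum over the sigma set and apply the Rankin–Selberg bound
  have step2 : ∑ x ∈ T, (C * ((r * x.1 : ℕ) : ℝ) ^ θ) ^ 2 * ‖A 1 x.2‖ ^ 2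
      ≤ ∑ n₁ ∈ S', (2 * C ^ 3 * N) * ((r : ℝ) ^ (2 * θ) * (n₁ : ℝ) ^ (2 * θ - 1)) := by
    rw [hT, Finset.sum_sigma]
    apply Finset.sum_le_sum
    intro n₁ hn₁
    rw [hS', Finset.mem_filter, Finset.mem_Icc] at hn₁
    have hn₁0 : 0 < n₁ := hn₁.1.1
    have hn₁R : (0:ℝ) < (n₁ : ℝ) := by exact_mod_cast hn₁0
    have hn₁2N : (n₁ : ℝ) ≤ 2 * N := le_trans (by exact_mod_cast hn₁.1.2) hM2N
    have hx1 : (1:ℝ) ≤ 2 * N / (n₁ : ℝ) := by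
      rw [le_div_iff₀ hn₁R]; linarith
    have hinner : ∑ m ∈ Finset.Icc 1 ⌊2 * N / (n₁ : ℝ)⌋₊, ‖A 1 m‖ ^ 2
        ≤ C * (2 * N / (n₁ : ℝ)) := hRS _ hx1
    calc ∑ m ∈ Finset.Icc 1 ⌊2 * N / (n₁ : ℝ)⌋₊,
          (C * ((r * n₁ : ℕ) : ℝ) ^ θ) ^ 2 * ‖A 1 m‖ ^ 2
        = (C * ((r * n₁ : ℕ) : ℝ) ^ θ) ^ 2
            * ∑ m ∈ Finset.Icc 1 ⌊2 * N / (n₁ : ℝ)⌋₊, ‖A 1 m‖ ^ 2 := by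
          rw [Finset.mul_sum]
      _ ≤ (C * ((r * n₁ : ℕ) : ℝ) ^ θ) ^ 2 * (C * (2 * N / (n₁ : ℝ))) := by
          apply mul_le_mul_of_nonneg_left hinner (by positivity)
      _ = (2 * C ^ 3 * N) * ((r : ℝ) ^ (2 * θ) * (n₁ : ℝ) ^ (2 * θ - 1)) :=
          term_eq hr hn₁0
  -- Step 3: the smooth sum bound
  have step3 : ∑ n₁ ∈ S', (n₁ : ℝ) ^ (2 * θ - 1)
      ≤ ∏ p ∈ r.primeFactors, (1 - (p : ℝ) ^ (2 * θ - 1))⁻¹ := by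
    have hSeq : S' = (Finset.Icc 1 M).filter
        (fun n => ∀ p, p.Prime → p ∣ n → p ∈ r.primeFactors) := by
      rw [hS']
      apply Finset.filter_congr
      intro n hn
      rw [Finset.mem_Icc] at hn
      constructor
      · intro h p hp hpd
        exact Nat.mem_primeFactors.mpr ⟨hp, h p hp hpd, by omega⟩
      · intro h p hp hpd
        exact (Nat.mem_primeFactors.mp (h p hp hpd)).2.1
    rw [hSeq]
    exact smooth_sum_le hσ M r.primeFactors (fun p hp => Nat.prime_of_mem_primeFactors hp)
  have hsum0 : (0:ℝ) ≤ 2 * C ^ 3 * N * (r : ℝ) ^ (2 * θ) := by positivity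
  calc ∑ n ∈ Finset.Ioc ⌊N⌋₊ M, ‖A r n‖ ^ 2
      ≤ ∑ n₁ ∈ S', (2 * C ^ 3 * N) * ((r : ℝ) ^ (2 * θ) * (n₁ : ℝ) ^ (2 * θ - 1)) :=
        step1.trans step2
    _ = (2 * C ^ 3 * N * (r : ℝ) ^ (2 * θ)) * ∑ n₁ ∈ S', (n₁ : ℝ) ^ (2 * θ - 1) := by
        rw [Finset.mul_sum]; apply Finset.sum_congr rfl; intro x _; ring
    _ ≤ (2 * C ^ 3 * N * (r : ℝ) ^ (2 * θ))
          * ∏ p ∈ r.primeFactors, (1 - (p : ℝ) ^ (2 * θ - 1))⁻¹ :=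
        mul_le_mul_of_nonneg_left step3 hsum0
    _ ≤ (2 * C ^ 3 * N * (r : ℝ) ^ (2 * θ)) * (C₀ * (r : ℝ) ^ ε) :=
        mul_le_mul_of_nonneg_left (hC₀ r hr) hsum0
    _ = 2 * C ^ 3 * C₀ * (r : ℝ) ^ (2 * θ + ε) * N := by
        rw [Real.rpow_add hr0]; ring
end

section
/- Let C ≥ 1. Let A : ℤ₊ × ℤ₊ → ℂ and λ : ℤ₊ → ℂ satisfy ∑_{n ≤ x} |A(r,n)|² ≤ C·r^{5/7}·x for all positive integers r and all real x ≥ 1, and ∑_{n ≤ x} |λ(n)|² ≤ C·x for all real x ≥ 1. Then for every ε > 0 there exists a constant C′ = C′(C, ε) such that: for all real M ≥ 1, all real t, all real N with 1 ≤ N ≤ (M·(1+|t|))^{3+ε}, every V : ℝ → ℂ with |V(x)| ≤ 1 for all x and V(x) = 0 for x ∉ [1,2], and every u : ℤ₊ → ℂ with |u(n)| ≤ 1, one has ∑_{r ≥ M^{1/8}·(1+|t|)^{3/10}} |∑_{n ≥ 1} A(r,n)·λ(n)·u(n)·V(r²·n/N)| ≤ C′·N^{1/2}·M^{3/2−1/16}·(1+|t|)^{3/2−3/20}·(M·(1+|t|))^ε.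 -/
/-!
The weight `V(r²n/N)` cuts the inner sum down to `n ≤ 2N/r²`, so Cauchy–Schwarz with the two
second-moment bounds makes it `≤ C r^{5/14} · 2N/r² = 2CN r^{-23/14}`. Writing
`r^{-23/14} = r^{-4/7} r^{-15/14}`, the `r`-sum over `r ≥ R := M^{1/8}(1+|t|)^{3/10}` is
`≪ C N R^{-4/7}`, and `N^{1/2} ≤ (M(1+|t|))^{(3+ε)/2}` turns `N^{1/2} R^{-4/7}` into
`M^{3/2-1/14} (1+|t|)^{3/2-6/35} (M(1+|t|))^{ε/2}`, which is smaller than the target.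
-/

open Finset Real

lemma tsum_subtype_one_le_eq_sum_Icc_floor {E : Type*} [AddCommMonoid E] [TopologicalSpace E]
    (f : ℕ → E) {y : ℝ} (hf : ∀ n : ℕ, y < n → f n = 0) :
    ∑' n : {n : ℕ // 1 ≤ n}, f n = ∑ n ∈ Icc 1 ⌊y⌋₊, f n := by
  refine (tsum_subtype {n : ℕ | 1 ≤ n} f).trans ?_
  rw [tsum_eq_sum (s := Icc 1 ⌊y⌋₊)]
  · exact sum_congr rfl fun n hn => Set.indicator_of_mem (mem_Icc.1 hn).1 f
  · intro n hn
    by_cases h1 : 1 ≤ n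
    · have hfloor : ⌊y⌋₊ < n := by simp only [mem_Icc, not_and, not_le] at hn; exact hn h1
      rw [Set.indicator_of_mem (show n ∈ {n : ℕ | 1 ≤ n} from h1)]
      exact hf n ((Nat.lt_floor_add_one y).trans_le (by exact_mod_cast hfloor))
    · exact Set.indicator_of_notMem h1 f

lemma norm_tsum_smoothed_le_sqrt_mul_sqrt {a b u : ℕ → ℂ} {V : ℝ → ℂ} {α β N r : ℝ}
    (ha : ∀ x : ℝ, 1 ≤ x → ∑ n ∈ Icc 1 ⌊x⌋₊, ‖a n‖ ^ 2 ≤ α * x)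
    (hb : ∀ x : ℝ, 1 ≤ x → ∑ n ∈ Icc 1 ⌊x⌋₊, ‖b n‖ ^ 2 ≤ β * x)
    (hu : ∀ n, ‖u n‖ ≤ 1) (hV : ∀ x, ‖V x‖ ≤ 1) (hV2 : ∀ x, 2 < x → V x = 0)
    (hN : 0 < N) (hr : 0 < r) :
    ‖∑' n : {n : ℕ // 1 ≤ n}, a n * b n * u n * V (r ^ 2 * n / N)‖
      ≤ √α * √β * (2 * N / r ^ 2) := by
  set y := 2 * N / r ^ 2
  have hy0 : 0 ≤ y := by positivity
  have hsupp : ∀ n : ℕ, y < n → a n * b n * u n * V (r ^ 2 * n / N) = 0 := fun n hn => by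
    rw [div_lt_iff₀ (by positivity)] at hn
    rw [hV2 _ (by rw [lt_div_iff₀ hN]; linarith), mul_zero]
  rw [tsum_subtype_one_le_eq_sum_Icc_floor _ hsupp]
  have hterm : ∀ n, ‖a n * b n * u n * V (r ^ 2 * n / N)‖ ≤ ‖a n‖ * ‖b n‖ := fun n => by
    simp only [norm_mul]
    exact mul_le_of_le_one_right (by positivity) (hV _) |>.trans
      (mul_le_of_le_one_right (by positivity) (hu n))
  refine (norm_sum_le_of_le _ fun n _ => hterm n).trans ?_
  rcases lt_or_ge y 1 with hy | hy
  · simp only [Nat.floor_eq_zero.2 hy, Order.lt_one_iff, Icc_eq_empty_of_lt, sum_empty]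
    positivity
  calc ∑ n ∈ Icc 1 ⌊y⌋₊, ‖a n‖ * ‖b n‖
      ≤ √(∑ n ∈ Icc 1 ⌊y⌋₊, ‖a n‖ ^ 2) * √(∑ n ∈ Icc 1 ⌊y⌋₊, ‖b n‖ ^ 2) :=
        sum_mul_le_sqrt_mul_sqrt _ _ _
    _ ≤ √(α * y) * √(β * y) := by gcongr <;> [exact ha y hy; exact hb y hy]
    _ = √α * √β * y := by
        rw [sqrt_mul' _ hy0, sqrt_mul' _ hy0, mul_mul_mul_comm, mul_self_sqrt hy0]

lemma norm_tsum_smoothed_le_rpow {a b u : ℕ → ℂ} {V : ℝ → ℂ} {C θ N r : ℝ} (hC : 0 ≤ C)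
    (ha : ∀ x : ℝ, 1 ≤ x → ∑ n ∈ Icc 1 ⌊x⌋₊, ‖a n‖ ^ 2 ≤ C * r ^ θ * x)
    (hb : ∀ x : ℝ, 1 ≤ x → ∑ n ∈ Icc 1 ⌊x⌋₊, ‖b n‖ ^ 2 ≤ C * x)
    (hu : ∀ n, ‖u n‖ ≤ 1) (hV : ∀ x, ‖V x‖ ≤ 1) (hV2 : ∀ x, 2 < x → V x = 0)
    (hN : 0 < N) (hr : 0 < r) :
    ‖∑' n : {n : ℕ // 1 ≤ n}, a n * b n * u n * V (r ^ 2 * n / N)‖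
      ≤ 2 * C * N * r ^ (θ / 2 - 2) := by
  refine (norm_tsum_smoothed_le_sqrt_mul_sqrt ha hb hu hV hV2 hN hr).trans_eq ?_
  have hsqrt : √(r ^ θ) = r ^ (θ / 2) := by rw [sqrt_eq_rpow, ← rpow_mul hr.le]; ring_nf
  rw [sqrt_mul' _ (by positivity), hsqrt, rpow_sub hr, rpow_two]
  linear_combination (2 * N * r ^ (θ / 2) / r ^ 2) * mul_self_sqrt hC

lemma tsum_tail_le_of_le_rpow {R K σ δ : ℝ} (hR : 0 < R) (hσ : 1 < σ) (hδ : 0 ≤ δ) (hK : 0 ≤ K)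
    {g : {r : ℕ // R ≤ r} → ℝ} (hg0 : ∀ r, 0 ≤ g r) (hg : ∀ r, g r ≤ K * (r : ℝ) ^ (-(σ + δ))) :
    ∑' r, g r ≤ K * R ^ (-δ) * ∑' r : ℕ, (r : ℝ) ^ (-σ) := by
  have hs : Summable fun r : ℕ => (r : ℝ) ^ (-σ) := summable_nat_rpow.2 (by linarith)
  have hdom : ∀ r : {r : ℕ // R ≤ r}, g r ≤ K * R ^ (-δ) * (r : ℝ) ^ (-σ) := fun r => by
    have hr0 : 0 < (r : ℝ) := hR.trans_le r.2
    calc g r ≤ K * (r : ℝ) ^ (-(σ + δ)) := hg r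
      _ = K * ((r : ℝ) ^ (-δ) * (r : ℝ) ^ (-σ)) := by rw [← rpow_add hr0]; ring_nf
      _ ≤ K * (R ^ (-δ) * (r : ℝ) ^ (-σ)) := by
          gcongr _ * (?_ * _)
          exact rpow_le_rpow_of_nonpos hR r.2 (by linarith)
      _ = K * R ^ (-δ) * (r : ℝ) ^ (-σ) := by ring
  have hsR : Summable fun r : {r : ℕ // R ≤ r} => K * R ^ (-δ) * (r : ℝ) ^ (-σ) :=
    (hs.subtype {r : ℕ | R ≤ r}).mul_left _
  calc ∑' r, g r ≤ ∑' r : {r : ℕ // R ≤ r}, K * R ^ (-δ) * (r : ℝ) ^ (-σ) :=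
        (hsR.of_nonneg_of_le hg0 hdom).tsum_le_tsum hdom hsR
    _ = K * R ^ (-δ) * ∑' r : {r : ℕ // R ≤ r}, (r : ℝ) ^ (-σ) := tsum_mul_left
    _ ≤ K * R ^ (-δ) * ∑' r : ℕ, (r : ℝ) ^ (-σ) := by
        gcongr; exact hs.tsum_subtype_le _ {r : ℕ | R ≤ r} fun _ => by positivity

lemma mul_cutoff_rpow_le {M T N ε : ℝ} (hM : 1 ≤ M) (hT : 1 ≤ T) (hN : 0 < N) (hε : 0 ≤ ε)
    (hNle : N ≤ (M * T) ^ (3 + ε)) :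
    N * (M ^ ((1 : ℝ) / 8) * T ^ ((3 : ℝ) / 10)) ^ (-((4 : ℝ) / 7))
      ≤ N ^ ((1 : ℝ) / 2) * M ^ ((3 : ℝ) / 2 - 1 / 16) * T ^ ((3 : ℝ) / 2 - 3 / 20)
        * (M * T) ^ ε := by
  have hM0 : 0 < M := one_pos.trans_le hM
  have hT0 : 0 < T := one_pos.trans_le hT
  have hMT : 1 ≤ M * T := one_le_mul_of_one_le_of_one_le hM hT
  have hsqrtN : N ^ ((1 : ℝ) / 2) ≤ M ^ ((3 : ℝ) / 2) * T ^ ((3 : ℝ) / 2) * (M * T) ^ (ε / 2) := by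
    calc N ^ ((1 : ℝ) / 2) ≤ ((M * T) ^ (3 + ε)) ^ ((1 : ℝ) / 2) := by gcongr
      _ = M ^ ((3 : ℝ) / 2) * T ^ ((3 : ℝ) / 2) * (M * T) ^ (ε / 2) := by
          rw [← rpow_mul (by positivity), show (3 + ε) * (1 / 2) = 3 / 2 + ε / 2 by ring,
            rpow_add (by positivity), mul_rpow hM0.le hT0.le]
  have hcutoff : (M ^ ((1 : ℝ) / 8) * T ^ ((3 : ℝ) / 10)) ^ (-((4 : ℝ) / 7))
      = M ^ (-((1 : ℝ) / 14)) * T ^ (-((6 : ℝ) / 35)) := by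
    rw [mul_rpow (by positivity) (by positivity), ← rpow_mul hM0.le, ← rpow_mul hT0.le]
    norm_num
  have hNsplit : N = N ^ ((1 : ℝ) / 2) * N ^ ((1 : ℝ) / 2) := by
    rw [← rpow_add hN]; norm_num
  have hM' : M ^ ((3 : ℝ) / 2 - 1 / 14) ≤ M ^ ((3 : ℝ) / 2 - 1 / 16) :=
    rpow_le_rpow_of_exponent_le hM (by norm_num)
  have hT' : T ^ ((3 : ℝ) / 2 - 6 / 35) ≤ T ^ ((3 : ℝ) / 2 - 3 / 20) :=
    rpow_le_rpow_of_exponent_le hT (by norm_num)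
  have hMT' : (M * T) ^ (ε / 2) ≤ (M * T) ^ ε := rpow_le_rpow_of_exponent_le hMT (by linarith)
  calc N * (M ^ ((1 : ℝ) / 8) * T ^ ((3 : ℝ) / 10)) ^ (-((4 : ℝ) / 7))
      = N ^ ((1 : ℝ) / 2) * (N ^ ((1 : ℝ) / 2) * M ^ (-((1 : ℝ) / 14)) * T ^ (-((6 : ℝ) / 35))) := by
        rw [hcutoff]; nth_rw 1 [hNsplit]; ring
    _ ≤ N ^ ((1 : ℝ) / 2) * (M ^ ((3 : ℝ) / 2) * T ^ ((3 : ℝ) / 2) * (M * T) ^ (ε / 2)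
          * M ^ (-((1 : ℝ) / 14)) * T ^ (-((6 : ℝ) / 35))) := by gcongr
    _ = N ^ ((1 : ℝ) / 2) * (M ^ ((3 : ℝ) / 2 - 1 / 14) * T ^ ((3 : ℝ) / 2 - 6 / 35)
          * (M * T) ^ (ε / 2)) := by
        rw [sub_eq_add_neg, sub_eq_add_neg, rpow_add hM0, rpow_add hT0]; ring
    _ ≤ N ^ ((1 : ℝ) / 2) * (M ^ ((3 : ℝ) / 2 - 1 / 16) * T ^ ((3 : ℝ) / 2 - 3 / 20)
          * (M * T) ^ ε) := by gcongr
    _ = _ := by ring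

/-- **Large-`r` contribution in the approximate functional equation.**
With the Kim–Sarnak exponent `5/7 = 2·(5/14)` in the second-moment bound for
`A(r,·)` and the Rankin–Selberg bound for `λ`, the terms with
`r ≥ M^{1/8}(1+|t|)^{3/10}` contribute at most
`N^{1/2} M^{3/2-1/16} (1+|t|)^{3/2-3/20} (M(1+|t|))^ε`. -/
theorem large_r_contribution (C : ℝ) (hC : 1 ≤ C)
    (A : ℕ → ℕ → ℂ) (l : ℕ → ℂ)
    (hA : ∀ r : ℕ, 0 < r → ∀ x : ℝ, 1 ≤ x →
      ∑ n ∈ Finset.Icc 1 ⌊x⌋₊, ‖A r n‖ ^ 2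
        ≤ C * (r : ℝ) ^ ((5 : ℝ) / 7) * x)
    (hl : ∀ x : ℝ, 1 ≤ x →
      ∑ n ∈ Finset.Icc 1 ⌊x⌋₊, ‖l n‖ ^ 2 ≤ C * x) :
    ∀ ε : ℝ, 0 < ε → ∃ C' : ℝ, ∀ M : ℝ, 1 ≤ M → ∀ t : ℝ, ∀ N : ℝ,
      1 ≤ N → N ≤ (M * (1 + |t|)) ^ ((3 : ℝ) + ε) →
      ∀ V : ℝ → ℂ, (∀ x : ℝ, ‖V x‖ ≤ 1) →
        (∀ x : ℝ, x ∉ Set.Icc (1 : ℝ) 2 → V x = 0) →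
      ∀ u : ℕ → ℂ, (∀ n : ℕ, ‖u n‖ ≤ 1) →
      ∑' r : {r : ℕ // M ^ ((1 : ℝ) / 8) * (1 + |t|) ^ ((3 : ℝ) / 10) ≤ (r : ℝ)},
        ‖∑' n : {n : ℕ // 1 ≤ n},
          A r.1 n.1 * l n.1 * u n.1 * V (((r.1 : ℝ)) ^ 2 * (n.1 : ℝ) / N)‖
        ≤ C' * N ^ ((1 : ℝ) / 2) * M ^ ((3 : ℝ) / 2 - 1 / 16)
            * (1 + |t|) ^ ((3 : ℝ) / 2 - 3 / 20) * (M * (1 + |t|)) ^ ε := by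
  intro ε hε
  set ζ := ∑' r : ℕ, (r : ℝ) ^ (-((15 : ℝ) / 14))
  refine ⟨2 * C * ζ, fun M hM t N hN hNle V hV hV0 u hu => ?_⟩
  have hT : 1 ≤ 1 + |t| := le_add_of_nonneg_right (abs_nonneg t)
  have hR : 1 ≤ M ^ ((1 : ℝ) / 8) * (1 + |t|) ^ ((3 : ℝ) / 10) :=
    one_le_mul_of_one_le_of_one_le (one_le_rpow hM (by norm_num)) (one_le_rpow hT (by norm_num))
  have hV2 : ∀ x : ℝ, 2 < x → V x = 0 := fun x hx => hV0 x fun h => hx.not_ge h.2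
  have hζ : 0 ≤ ζ := tsum_nonneg fun r => by positivity
  have hinner : ∀ r : {r : ℕ // M ^ ((1 : ℝ) / 8) * (1 + |t|) ^ ((3 : ℝ) / 10) ≤ (r : ℝ)},
      ‖∑' n : {n : ℕ // 1 ≤ n}, A r.1 n.1 * l n.1 * u n.1 * V (((r.1 : ℝ)) ^ 2 * (n.1 : ℝ) / N)‖
        ≤ 2 * C * N * (r : ℝ) ^ (-((15 : ℝ) / 14 + 4 / 7)) := fun r => by
    have hr : (0 : ℝ) < r := one_pos.trans_le (hR.trans r.2)
    convert norm_tsum_smoothed_le_rpow (by linarith) (hA r (by exact_mod_cast hr)) hl hu hV hV2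
      (by linarith : (0 : ℝ) < N) hr using 3
    norm_num
  calc _ ≤ 2 * C * N * (M ^ ((1 : ℝ) / 8) * (1 + |t|) ^ ((3 : ℝ) / 10)) ^ (-((4 : ℝ) / 7)) * ζ :=
        tsum_tail_le_of_le_rpow (by linarith) (by norm_num) (by norm_num) (by positivity)
          (fun _ => norm_nonneg _) hinner
    _ ≤ _ := by
        have := mul_le_mul_of_nonneg_left (mul_cutoff_rpow_le hM hT (by linarith) hε.le hNle)
          (by positivity : 0 ≤ 2 * C * ζ)
        linarith
end

section
/- Let q, q′, d, d′, n₁ be positive integers with d ∣ q, d′ ∣ q′ and gcd(n₁, q·q′) = 1, and let c, a, a′ be integers. Let S be the set of pairs (α, α′) with α a unit in ℤ/qℤ and α′ a unit in ℤ/q′ℤ such that, for any integers x, y with x·α ≡ 1 (mod q) and y·α′ ≡ 1 (mod q′), one has q′·x − q·y ≡ c (mod q·q′), n₁·α ≡ a (mod d), and n₁·α′ ≡ a′ (mod d′). Then: (1) S is empty unless gcd(q, q′) ∣ c, n₁·q′ ≡ c·a (mod d), and n₁·q ≡ −c·a′ (mod d′); (2) the cardinality of S is at most q / lcm(q/gcd(q,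 q′), d). -/
private lemma dvd_cancel_aux {m u v s t : ℤ} (h : m ∣ u * v - 1) (hd : m ∣ u * (s - t)) :
    m ∣ s - t := by
  have h2 : m ∣ v * (u * (s - t)) := hd.mul_left v
  have e : s - t = v * (u * (s - t)) - (u * v - 1) * (s - t) := by ring
  rw [e]
  exact dvd_sub h2 (h.mul_right _)

/-- **Counting bound for the character sum `𝔠₃(n₂)`.**
For `d ∣ q`, `d' ∣ q'`, `gcd(n₁, qq') = 1`, the set `S` of pairs of units
`(α, α')` whose inverses `x, y` satisfy `q'x - qy ≡ c (mod qq')`,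
`n₁α ≡ a (mod d)`, `n₁α' ≡ a' (mod d')` is empty unless `gcd(q,q') ∣ c`,
`n₁q' ≡ ca (mod d)` and `n₁q ≡ -ca' (mod d')`, and
`#S ≤ q / lcm(q/gcd(q,q'), d)`. -/
theorem character_sum_counting (q q' d d' n₁ : ℕ)
    (hq : 0 < q) (hq' : 0 < q') (hd0 : 0 < d) (hd'0 : 0 < d') (hn₁ : 0 < n₁)
    (hd : d ∣ q) (hd' : d' ∣ q') (hcop : Nat.gcd n₁ (q * q') = 1)
    (c a a' : ℤ) (S : Set ((ZMod q)ˣ × (ZMod q')ˣ))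
    (hS : S = {p | ∀ x y : ℤ,
      (x : ZMod q) * (p.1 : ZMod q) = 1 → (y : ZMod q') * (p.2 : ZMod q') = 1 →
      ((q' : ℤ) * x - (q : ℤ) * y ≡ c [ZMOD ((q * q' : ℕ) : ℤ)] ∧
        (n₁ : ℤ) * ((p.1 : ZMod q).val : ℤ) ≡ a [ZMOD (d : ℤ)] ∧
        (n₁ : ℤ) * ((p.2 : ZMod q').val : ℤ) ≡ a' [ZMOD (d' : ℤ)])}) :
    (S.Nonempty →
      ((Nat.gcd q q' : ℤ) ∣ c ∧
        (n₁ : ℤ) * (q' : ℤ) ≡ c * a [ZMOD (d : ℤ)] ∧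
        (n₁ : ℤ) * (q : ℤ) ≡ -(c * a') [ZMOD (d' : ℤ)])) ∧
    S.ncard ≤ q / Nat.lcm (q / Nat.gcd q q') d := by
  haveI : NeZero q := ⟨hq.ne'⟩
  haveI : NeZero q' := ⟨hq'.ne'⟩
  set g := Nat.gcd q q' with hgdef
  set q₁ := q / g with hq₁def
  set L := Nat.lcm q₁ d with hLdef
  have hgq : g ∣ q := Nat.gcd_dvd_left q q'
  have hgq' : g ∣ q' := Nat.gcd_dvd_right q q'
  have hg0 : 0 < g := Nat.gcd_pos_of_pos_left _ hq
  have hq10 : 0 < q₁ := Nat.div_pos (Nat.le_of_dvd hq hgq) hg0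
  have hL0 : 0 < L := Nat.lcm_pos hq10 hd0
  have hq1q : q₁ ∣ q := Nat.div_dvd_of_dvd hgq
  have hLq : L ∣ q := Nat.lcm_dvd hq1q hd
  have hqeq : q = g * q₁ := (Nat.mul_div_cancel' hgq).symm
  have hq'eq : q' = g * (q' / g) := (Nat.mul_div_cancel' hgq').symm
  -- Extraction of the congruences for a member of `S`, for canonical inverses.
  have key : ∀ p : (ZMod q)ˣ × (ZMod q')ˣ, p ∈ S →
      ∃ x y : ℤ,
        x * (((p.1 : ZMod q)).val : ℤ) ≡ 1 [ZMOD (q : ℤ)] ∧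
        y * (((p.2 : ZMod q')).val : ℤ) ≡ 1 [ZMOD (q' : ℤ)] ∧
        ((q' : ℤ) * x - (q : ℤ) * y ≡ c [ZMOD ((q * q' : ℕ) : ℤ)]) ∧
        ((n₁ : ℤ) * (((p.1 : ZMod q)).val : ℤ) ≡ a [ZMOD (d : ℤ)]) ∧
        ((n₁ : ℤ) * (((p.2 : ZMod q')).val : ℤ) ≡ a' [ZMOD (d' : ℤ)]) := by
    intro p hp
    rw [hS] at hp
    simp only [Set.mem_setOf_eq] at hp
    refine ⟨(((p.1⁻¹ : (ZMod q)ˣ) : ZMod q).val : ℤ), (((p.2⁻¹ : (ZMod q')ˣ) : ZMod q').val : ℤ),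
      ?_, ?_, ?_⟩
    · rw [← ZMod.intCast_eq_intCast_iff]
      push_cast
      rw [ZMod.natCast_val, ZMod.cast_id, ZMod.natCast_val, ZMod.cast_id]
      exact p.1.inv_mul
    · rw [← ZMod.intCast_eq_intCast_iff]
      push_cast
      rw [ZMod.natCast_val, ZMod.cast_id, ZMod.natCast_val, ZMod.cast_id]
      exact p.2.inv_mul
    · refine hp _ _ ?_ ?_
      · push_cast
        rw [ZMod.natCast_val, ZMod.cast_id]
        exact p.1.inv_mul
      · push_cast
        rw [ZMod.natCast_val, ZMod.cast_id]
        exact p.2.inv_mul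
  -- First part: necessary conditions for nonemptiness.
  have part1 : S.Nonempty →
      ((g : ℤ) ∣ c ∧ (n₁ : ℤ) * (q' : ℤ) ≡ c * a [ZMOD (d : ℤ)] ∧
        (n₁ : ℤ) * (q : ℤ) ≡ -(c * a') [ZMOD (d' : ℤ)]) := by
    rintro ⟨p, hp⟩
    obtain ⟨x, y, hx, hy, H1, H2, H3⟩ := key p hp
    set v : ℤ := ((p.1 : ZMod q).val : ℤ) with hv
    set w : ℤ := ((p.2 : ZMod q').val : ℤ) with hw
    refine ⟨?_, ?_, ?_⟩
    · have h1 : (g : ℤ) ∣ (q' : ℤ) * x - (q : ℤ) * y :=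
        dvd_sub ((Int.natCast_dvd_natCast.mpr hgq').mul_right x)
          ((Int.natCast_dvd_natCast.mpr hgq).mul_right y)
      have h2 : (g : ℤ) ∣ ((q * q' : ℕ) : ℤ) :=
        Int.natCast_dvd_natCast.mpr (dvd_mul_of_dvd_left hgq q')
      have h3 : (g : ℤ) ∣ c - ((q' : ℤ) * x - (q : ℤ) * y) := h2.trans H1.dvd
      have e : c = (c - ((q' : ℤ) * x - (q : ℤ) * y)) + ((q' : ℤ) * x - (q : ℤ) * y) := by ring
      rw [e]; exact dvd_add h3 h1
    · have hdq : (d : ℤ) ∣ ((q * q' : ℕ) : ℤ) :=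
        Int.natCast_dvd_natCast.mpr (hd.trans (dvd_mul_right q q'))
      have H1d : (q' : ℤ) * x - (q : ℤ) * y ≡ c [ZMOD (d : ℤ)] := H1.of_dvd hdq
      have hqy : (q : ℤ) * y ≡ 0 [ZMOD (d : ℤ)] :=
        Int.modEq_zero_iff_dvd.mpr ((Int.natCast_dvd_natCast.mpr hd).mul_right y)
      have hq'x : (q' : ℤ) * x ≡ c [ZMOD (d : ℤ)] := by
        have h := H1d.add hqy
        have e : (q' : ℤ) * x - (q : ℤ) * y + (q : ℤ) * y = (q' : ℤ) * x := by ring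
        rw [e, add_zero] at h
        exact h
      have hxvd : x * v ≡ 1 [ZMOD (d : ℤ)] := hx.of_dvd (Int.natCast_dvd_natCast.mpr hd)
      calc (n₁ : ℤ) * (q' : ℤ) = (n₁ : ℤ) * (q' : ℤ) * 1 := by ring
        _ ≡ (n₁ : ℤ) * (q' : ℤ) * (x * v) [ZMOD (d : ℤ)] := (hxvd.symm).mul_left _
        _ = ((q' : ℤ) * x) * ((n₁ : ℤ) * v) := by ring
        _ ≡ c * a [ZMOD (d : ℤ)] := hq'x.mul H2
    · have hd'q : (d' : ℤ) ∣ ((q * q' : ℕ) : ℤ) :=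
        Int.natCast_dvd_natCast.mpr (hd'.trans (dvd_mul_left q' q))
      have H1d' : (q' : ℤ) * x - (q : ℤ) * y ≡ c [ZMOD (d' : ℤ)] := H1.of_dvd hd'q
      have hq'x0 : (q' : ℤ) * x ≡ 0 [ZMOD (d' : ℤ)] :=
        Int.modEq_zero_iff_dvd.mpr ((Int.natCast_dvd_natCast.mpr hd').mul_right x)
      have hqyc : -((q : ℤ) * y) ≡ c [ZMOD (d' : ℤ)] := by
        have h := H1d'.sub hq'x0
        have e : ((q' : ℤ) * x - (q : ℤ) * y) - (q' : ℤ) * x = -((q : ℤ) * y) := by ring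
        rw [e, sub_zero] at h
        exact h
      have hywd' : y * w ≡ 1 [ZMOD (d' : ℤ)] := hy.of_dvd (Int.natCast_dvd_natCast.mpr hd')
      have hneg : -((n₁ : ℤ) * (q : ℤ)) ≡ c * a' [ZMOD (d' : ℤ)] := by
        calc -((n₁ : ℤ) * (q : ℤ)) = -((n₁ : ℤ) * (q : ℤ)) * 1 := by ring
          _ ≡ -((n₁ : ℤ) * (q : ℤ)) * (y * w) [ZMOD (d' : ℤ)] := (hywd'.symm).mul_left _
          _ = (-((q : ℤ) * y)) * ((n₁ : ℤ) * w) := by ring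
          _ ≡ c * a' [ZMOD (d' : ℤ)] := hqyc.mul H3
      have := hneg.neg
      rw [neg_neg] at this
      exact this
  -- coprimality facts
  have hcopd : Nat.Coprime n₁ d :=
    Nat.Coprime.coprime_dvd_right (hd.trans (dvd_mul_right q q')) hcop
  have hcopdZ : IsCoprime ((d : ℕ) : ℤ) ((n₁ : ℕ) : ℤ) :=
    Nat.isCoprime_iff_coprime.mpr hcopd.symm
  have hcoprq : Nat.Coprime q₁ (q' / g) := Nat.coprime_div_gcd_div_gcd hg0
  have hcoprqZ : IsCoprime ((q₁ : ℕ) : ℤ) (((q' / g : ℕ) : ℕ) : ℤ) :=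
    Nat.isCoprime_iff_coprime.mpr hcoprq
  -- the first coordinate is determined modulo L
  have hvcong : ∀ p ∈ S, ∀ p' ∈ S,
      (L : ℤ) ∣ (((p.1 : ZMod q)).val : ℤ) - (((p'.1 : ZMod q)).val : ℤ) := by
    intro p hp p' hp'
    obtain ⟨x, y, hx, hy, H1, H2, H3⟩ := key p hp
    obtain ⟨x', y', hx', hy', H1', H2', H3'⟩ := key p' hp'
    set v : ℤ := ((p.1 : ZMod q).val : ℤ) with hv
    set v' : ℤ := ((p'.1 : ZMod q).val : ℤ) with hv'
    have hdvv : (d : ℤ) ∣ v - v' := by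
      have h1 : (d : ℤ) ∣ (n₁ : ℤ) * v' - (n₁ : ℤ) * v := (H2.trans H2'.symm).dvd
      have h2 : (d : ℤ) ∣ (n₁ : ℤ) * (v' - v) := by rw [mul_sub]; exact h1
      have h3 : (d : ℤ) ∣ v' - v := hcopdZ.dvd_of_dvd_mul_left h2
      have e : v - v' = -(v' - v) := by ring
      rw [e]; exact dvd_neg.mpr h3
    have hq1vv : (q₁ : ℤ) ∣ v - v' := by
      have hA : ((q * q' : ℕ) : ℤ) ∣ ((q' : ℤ) * x - (q : ℤ) * y - c) := H1.symm.dvd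
      have hA' : ((q * q' : ℕ) : ℤ) ∣ ((q' : ℤ) * x' - (q : ℤ) * y' - c) := H1'.symm.dvd
      have hq_dvd : (q : ℤ) ∣ (q' : ℤ) * (x - x') := by
        have h1 : ((q * q' : ℕ) : ℤ) ∣ ((q' : ℤ) * (x - x') - (q : ℤ) * (y - y')) := by
          have h := dvd_sub hA hA'
          have e : ((q' : ℤ) * x - (q : ℤ) * y - c) - ((q' : ℤ) * x' - (q : ℤ) * y' - c)
              = (q' : ℤ) * (x - x') - (q : ℤ) * (y - y') := by ring
          rwa [e] at h
        have h2 : (q : ℤ) ∣ ((q' : ℤ) * (x - x') - (q : ℤ) * (y - y')) :=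
          dvd_trans (by push_cast; exact dvd_mul_right _ _) h1
        have h3 : (q : ℤ) ∣ (q : ℤ) * (y - y') := dvd_mul_right _ _
        have e2 : (q' : ℤ) * (x - x') = ((q' : ℤ) * (x - x') - (q : ℤ) * (y - y'))
            + (q : ℤ) * (y - y') := by ring
        rw [e2]; exact dvd_add h2 h3
      have hxx' : (q₁ : ℤ) ∣ x - x' := by
        have eqz : (q : ℤ) = (g : ℤ) * (q₁ : ℤ) := by exact_mod_cast hqeq
        have eq'z : (q' : ℤ) = (g : ℤ) * ((q' / g : ℕ) : ℤ) := by exact_mod_cast hq'eq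
        have h1 : (g : ℤ) * (q₁ : ℤ) ∣ (g : ℤ) * (((q' / g : ℕ) : ℤ) * (x - x')) := by
          rw [← eqz, ← mul_assoc, ← eq'z]
          exact hq_dvd
        have h2 : (q₁ : ℤ) ∣ ((q' / g : ℕ) : ℤ) * (x - x') :=
          (mul_dvd_mul_iff_left (show (g : ℤ) ≠ 0 by exact_mod_cast hg0.ne')).mp h1
        exact hcoprqZ.dvd_of_dvd_mul_left h2
      have hxvq1 : x * v ≡ 1 [ZMOD (q₁ : ℤ)] := hx.of_dvd (Int.natCast_dvd_natCast.mpr hq1q)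
      have hx'v'q1 : x' * v' ≡ 1 [ZMOD (q₁ : ℤ)] := hx'.of_dvd (Int.natCast_dvd_natCast.mpr hq1q)
      have hxv1 : (q₁ : ℤ) ∣ x' * (v - v') := by
        have h1 : (q₁ : ℤ) ∣ x * v - 1 := hxvq1.symm.dvd
        have h2 : (q₁ : ℤ) ∣ x' * v' - 1 := hx'v'q1.symm.dvd
        have h3 : (q₁ : ℤ) ∣ (x - x') * v := hxx'.mul_right v
        have e : x' * (v - v') = (x * v - 1) - (x' * v' - 1) - (x - x') * v := by ring
        rw [e]; exact dvd_sub (dvd_sub h1 h2) h3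
      exact dvd_cancel_aux hx'v'q1.symm.dvd hxv1
    have hlcm : ((Int.lcm (q₁ : ℤ) (d : ℤ) : ℕ) : ℤ) ∣ v - v' := Int.coe_lcm_dvd hq1vv hdvv
    have e : (L : ℤ) = ((Int.lcm (q₁ : ℤ) (d : ℤ) : ℕ) : ℤ) := by
      rw [hLdef]
      simp [Int.lcm]
    rw [e]; exact hlcm
  -- the second coordinate is determined by the first
  have hsnd : ∀ p ∈ S, ∀ p' ∈ S, p.1 = p'.1 → p.2 = p'.2 := by
    intro p hp p' hp' h1eq
    obtain ⟨x, y, hx, hy, H1, H2, H3⟩ := key p hp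
    obtain ⟨x', y', hx', hy', H1', H2', H3'⟩ := key p' hp'
    set v : ℤ := ((p.1 : ZMod q).val : ℤ) with hv
    have hveq : ((p'.1 : ZMod q).val : ℤ) = v := by rw [hv, h1eq]
    rw [hveq] at hx'
    have h1 : (q : ℤ) ∣ v * (x - x') := by
      have e : v * (x - x') = (x * v - 1) - (x' * v - 1) := by ring
      rw [e]; exact dvd_sub hx.symm.dvd hx'.symm.dvd
    have hxx' : (q : ℤ) ∣ x - x' := by
      refine dvd_cancel_aux (v := x) ?_ h1
      rw [mul_comm]
      exact hx.symm.dvd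
    have hqq'yy : ((q * q' : ℕ) : ℤ) ∣ (q : ℤ) * (y - y') := by
      have hA : ((q * q' : ℕ) : ℤ) ∣ ((q' : ℤ) * x - (q : ℤ) * y - c) := H1.symm.dvd
      have hA' : ((q * q' : ℕ) : ℤ) ∣ ((q' : ℤ) * x' - (q : ℤ) * y' - c) := H1'.symm.dvd
      have hB : ((q * q' : ℕ) : ℤ) ∣ (q' : ℤ) * (x - x') := by
        have e : ((q * q' : ℕ) : ℤ) = (q' : ℤ) * (q : ℤ) := by push_cast; ring
        rw [e]; exact mul_dvd_mul_left _ hxx'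
      have e : (q : ℤ) * (y - y') = ((q' : ℤ) * (x - x'))
          - (((q' : ℤ) * x - (q : ℤ) * y - c) - ((q' : ℤ) * x' - (q : ℤ) * y' - c)) := by ring
      rw [e]; exact dvd_sub hB (dvd_sub hA hA')
    have hyy' : (q' : ℤ) ∣ y - y' := by
      have e : ((q * q' : ℕ) : ℤ) = (q : ℤ) * (q' : ℤ) := by push_cast; ring
      rw [e] at hqq'yy
      exact (mul_dvd_mul_iff_left (show (q : ℤ) ≠ 0 by exact_mod_cast hq.ne')).mp hqq'yy
    have hww : (q' : ℤ) ∣ ((p.2 : ZMod q').val : ℤ) - ((p'.2 : ZMod q').val : ℤ) := by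
      have h2 : (q' : ℤ) ∣ y' * (((p.2 : ZMod q').val : ℤ) - ((p'.2 : ZMod q').val : ℤ)) := by
        have e : y' * (((p.2 : ZMod q').val : ℤ) - ((p'.2 : ZMod q').val : ℤ))
            = (y * ((p.2 : ZMod q').val : ℤ) - 1) - (y' * ((p'.2 : ZMod q').val : ℤ) - 1)
              - (y - y') * ((p.2 : ZMod q').val : ℤ) := by ring
        rw [e]; exact dvd_sub (dvd_sub hy.symm.dvd hy'.symm.dvd) (hyy'.mul_right _)
      exact dvd_cancel_aux hy'.symm.dvd h2
    have hcast : ((((p.2 : ZMod q').val : ℤ)) : ZMod q') = ((((p'.2 : ZMod q').val : ℤ)) : ZMod q') := by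
      rw [ZMod.intCast_eq_intCast_iff]
      refine Int.ModEq.symm (Int.modEq_iff_dvd.mpr ?_)
      exact hww
    have h2 : (p.2 : ZMod q') = (p'.2 : ZMod q') := by
      have e1 : ((((p.2 : ZMod q').val : ℤ)) : ZMod q') = (p.2 : ZMod q') := by
        push_cast
        rw [ZMod.natCast_val, ZMod.cast_id]
      have e2 : ((((p'.2 : ZMod q').val : ℤ)) : ZMod q') = (p'.2 : ZMod q') := by
        push_cast
        rw [ZMod.natCast_val, ZMod.cast_id]
      rw [← e1, ← e2, hcast]
    exact Units.ext h2
  refine ⟨part1, ?_⟩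
  -- counting
  have hinj : Function.Injective (fun (p : S) =>
      (⟨((p.1.1 : ZMod q)).val / L, Nat.div_lt_div_of_lt_of_dvd hLq (ZMod.val_lt _)⟩ :
        Fin (q / L))) := by
    rintro ⟨p, hp⟩ ⟨p', hp'⟩ hf
    simp only [Fin.mk.injEq] at hf
    have hdiv : ((p.1 : ZMod q)).val / L = ((p'.1 : ZMod q)).val / L := hf
    have hmodZ : (L : ℤ) ∣ (((p.1 : ZMod q)).val : ℤ) - (((p'.1 : ZMod q)).val : ℤ) :=
      hvcong p hp p' hp'
    have hmod : ((p'.1 : ZMod q)).val ≡ ((p.1 : ZMod q)).val [MOD L] :=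
      Nat.modEq_iff_dvd.mpr hmodZ
    have hmod' : ((p'.1 : ZMod q)).val % L = ((p.1 : ZMod q)).val % L := hmod
    have hveq : ((p.1 : ZMod q)).val = ((p'.1 : ZMod q)).val := by
      have e1 := (Nat.div_add_mod ((p.1 : ZMod q)).val L).symm
      have e2 := (Nat.div_add_mod ((p'.1 : ZMod q)).val L).symm
      rw [e1, e2, hdiv, hmod']
    have h1 : p.1 = p'.1 := Units.ext (ZMod.val_injective q hveq)
    have h2 : p.2 = p'.2 := hsnd p hp p' hp' h1
    exact Subtype.ext (Prod.ext h1 h2)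
  calc S.ncard = Nat.card S := (Nat.card_coe_set_eq S).symm
    _ ≤ Nat.card (Fin (q / L)) := Nat.card_le_card_of_injective _ hinj
    _ = q / L := by simp
end
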